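/- (Linear convergence of simplified Newton iteration) Let I be a strong interval approximate zero of a polynomial system F : ℂⁿ → ℂⁿ with matrix Y, and let x* ∈ I be the unique zero of F in I. For any x₀ ∈ I define x_{i+1} = x_i − Y·F(x_i). Then all x_i remain in I and ‖x* − x_{i+1}‖_∞ ≤ c·‖x* − x_i‖_∞ where c = √2·‖1ₙ − Y·□JF(I)‖_∞ < 1; in particular x_i → x*. -/

import Mathlib

open Set Pointwise

noncomputable section

/-- Pointwise addition of sets of reals. -/
def sadd (X Y : Set ℝ) : Set ℝ := Set.image2 (· + ·) X Y

/-- Pointwise subtraction of sets of reals. -/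
def ssub (X Y : Set ℝ) : Set ℝ := Set.image2 (· - ·) X Y

/-- Pointwise multiplication of sets of reals. -/
def smul' (X Y : Set ℝ) : Set ℝ := Set.image2 (· * ·) X Y

/-- The rectangular complex interval `X + iY`. -/
def cI (X Y : Set ℝ) : Set ℂ := {z | z.re ∈ X ∧ z.im ∈ Y}

/-- Real parts of a set of complex numbers. -/
def reS (S : Set ℂ) : Set ℝ := Complex.re '' S

/-- Imaginary parts of a set of complex numbers. -/
def imS (S : Set ℂ) : Set ℝ := Complex.im '' S

/-- Complex interval multiplication:
`(X+iY)·(W+iZ) = (X·W − Y·Z) + i(X·Z + Y·W)`. -/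
def cmul (S T : Set ℂ) : Set ℂ :=
  cI (ssub (smul' (reS S) (reS T)) (smul' (imS S) (imS T)))
     (sadd (smul' (reS S) (imS T)) (smul' (imS S) (reS T)))

/-- `S` is a rectangular complex interval. -/
def IsRect (S : Set ℂ) : Prop :=
  ∃ a b c d : ℝ, a ≤ b ∧ c ≤ d ∧ S = cI (Set.Icc a b) (Set.Icc c d)

variable {n : ℕ}

/-- The interval vector `I ∈ 𝕀ℂⁿ` determined by coordinate intervals `IV`. -/
def boxSet (IV : Fin n → Set ℂ) : Set (Fin n → ℂ) := {z | ∀ j, z j ∈ IV j}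

/-- `F` is a square polynomial system. -/
def IsPolyMap (F : (Fin n → ℂ) → Fin n → ℂ) : Prop :=
  ∀ i, ∃ p : MvPolynomial (Fin n) ℂ, ∀ z, F z i = MvPolynomial.eval z p

/-- The Jacobian matrix `JF(z)` of `F` at `z`. -/
def jac (F : (Fin n → ℂ) → Fin n → ℂ) (z : Fin n → ℂ) : Matrix (Fin n) (Fin n) ℂ :=
  fun i j => fderiv ℂ (fun w => F w i) z (Pi.single j 1)

/-- Entries of the interval matrix `1ₙ − Y·□JF(I)`, where `MJ` is the interval
enclosure of the Jacobian on `I`, computed in complex interval arithmetic. -/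
def Bmat (Y : Matrix (Fin n) (Fin n) ℂ) (MJ : Fin n → Fin n → Set ℂ) :
    Fin n → Fin n → Set ℂ :=
  fun i j => ({(if i = j then (1 : ℂ) else 0)} : Set ℂ) - ∑ k, cmul {Y i k} (MJ k j)

/-- Coordinates of the Krawczyk set
`K_{x,Y}(I) = x − Y·□F(x) + (1ₙ − Y·□JF(I))(I − x)`, where `FX` is the interval
enclosure `□F(x)` and `MJ` the interval enclosure `□JF(I)`. -/
def Kset (x : Fin n → ℂ) (Y : Matrix (Fin n) (Fin n) ℂ)
    (FX : Fin n → Set ℂ) (MJ : Fin n → Fin n → Set ℂ) (IV : Fin n → Set ℂ) :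
    Fin n → Set ℂ :=
  fun i => (({x i} : Set ℂ) - ∑ j, cmul {Y i j} (FX j)) +
      ∑ j, cmul ((IV j) - {x j}) (Bmat Y MJ i j)

/-- The `∞`-operator norm of a complex matrix (`Fin n → ℂ` carries the max norm). -/
def opNormInf (M : Matrix (Fin n) (Fin n) ℂ) : ℝ :=
  sSup {r | ∃ v : Fin n → ℂ, ‖v‖ = 1 ∧ r = ‖M.mulVec v‖}

/-- The norm `‖A‖_∞` of an interval matrix: the maximum of the `∞`-operator norms
over all matrices contained in it. -/
def imatNorm (B : Fin n → Fin n → Set ℂ) : ℝ :=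
  sSup {r | ∃ M : Matrix (Fin n) (Fin n) ℂ, (∀ i j, M i j ∈ B i j) ∧ r = opNormInf M}

/-!
For polynomial `F` and `a, b ∈ I`, `F b - F a = M (b - a)` with
`M = ∫₀¹ JF(a + t (b - a)) dt`, and `M ∈ □JF(I)` because rectangles are closed and convex.
Hence the Newton map `N z = z - Y F z` satisfies
`N z = x - Y F x + (1 - Y M)(z - x) ∈ K_{x,Y}(I) ⊆ I`, and, as `F x* = 0`,
`x* - N z = (1 - Y M)(x* - z)` with `1 - Y M` a member of the interval matrix `1 - Y □JF(I)`,
whose `∞`-norm is at most `c`.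
-/

open Bornology Complex Matrix Filter Topology MeasureTheory

theorem IsRect.convex {S : Set ℂ} (h : IsRect S) : Convex ℝ S := by
  obtain ⟨a, b, c, d, -, -, rfl⟩ := h
  exact ((convex_Icc a b).linear_preimage reLm).inter ((convex_Icc c d).linear_preimage imLm)

theorem IsRect.isClosed {S : Set ℂ} (h : IsRect S) : IsClosed S := by
  obtain ⟨a, b, c, d, -, -, rfl⟩ := h
  exact isClosed_Icc.reProdIm isClosed_Icc

theorem IsRect.isBounded {S : Set ℂ} (h : IsRect S) : IsBounded S := by
  obtain ⟨a, b, c, d, -, -, rfl⟩ := h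
  exact Metric.isBounded_Icc a b |>.reProdIm (Metric.isBounded_Icc c d)

theorem Bornology.IsBounded.cmul {S T : Set ℂ} (hS : IsBounded S) (hT : IsBounded T) :
    IsBounded (cmul S T) := by
  have hre : ∀ {U : Set ℂ}, IsBounded U → IsBounded (reS U) :=
    fun hU => reCLM.lipschitz.isBounded_image hU
  have him : ∀ {U : Set ℂ}, IsBounded U → IsBounded (imS U) :=
    fun hU => imCLM.lipschitz.isBounded_image hU
  exact (isBounded_mul (hre hS) (hre hT) |>.sub (isBounded_mul (him hS) (him hT))).reProdIm
    (isBounded_mul (hre hS) (him hT) |>.add (isBounded_mul (him hS) (hre hT)))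

theorem mul_mem_cmul {S T : Set ℂ} {a b : ℂ} (ha : a ∈ S) (hb : b ∈ T) :
    a * b ∈ cmul S T :=
  ⟨⟨a.re * b.re, ⟨_, mem_image_of_mem _ ha, _, mem_image_of_mem _ hb, rfl⟩, a.im * b.im,
      ⟨_, mem_image_of_mem _ ha, _, mem_image_of_mem _ hb, rfl⟩, rfl⟩,
    ⟨a.re * b.im, ⟨_, mem_image_of_mem _ ha, _, mem_image_of_mem _ hb, rfl⟩, a.im * b.re,
      ⟨_, mem_image_of_mem _ ha, _, mem_image_of_mem _ hb, rfl⟩, by simp [mul_im]⟩⟩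

theorem Bornology.IsBounded.finsetSum {ι E : Type*} [SeminormedAddCommGroup E] (s : Finset ι)
    {S : ι → Set E} (h : ∀ i ∈ s, IsBounded (S i)) : IsBounded (∑ i ∈ s, S i) := by
  classical
  induction s using Finset.induction with
  | empty => exact isBounded_singleton
  | insert i s hi ih =>
    rw [Finset.sum_insert hi]
    exact (h i (s.mem_insert_self i)).add (ih fun j hj => h j (Finset.mem_insert_of_mem hj))

theorem isBounded_Bmat (Y : Matrix (Fin n) (Fin n) ℂ) {MJ : Fin n → Fin n → Set ℂ}
    (hMJ : ∀ i j, IsBounded (MJ i j)) (i j : Fin n) : IsBounded (Bmat Y MJ i j) :=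
  isBounded_singleton.sub <| IsBounded.finsetSum _ fun k _ => isBounded_singleton.cmul (hMJ k j)

theorem one_sub_mul_mem_Bmat (Y : Matrix (Fin n) (Fin n) ℂ) {MJ : Fin n → Fin n → Set ℂ}
    {M : Matrix (Fin n) (Fin n) ℂ} (hM : ∀ i j, M i j ∈ MJ i j) (i j : Fin n) :
    (1 - Y * M) i j ∈ Bmat Y MJ i j := by
  rw [Matrix.sub_apply, Matrix.one_apply, Matrix.mul_apply]
  exact sub_mem_sub rfl (Set.finsetSum_mem_finsetSum _ _ _ fun k _ => mul_mem_cmul rfl (hM k j))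

theorem Convex.intervalIntegral_zero_one_mem {E : Type*} [NormedAddCommGroup E]
    [NormedSpace ℝ E] [CompleteSpace E] {s : Set E} (hs : Convex ℝ s) (hsc : IsClosed s)
    {f : ℝ → E} (hf : Continuous f) (hfs : ∀ t ∈ Icc (0 : ℝ) 1, f t ∈ s) :
    ∫ t in (0 : ℝ)..1, f t ∈ s := by
  have : IsProbabilityMeasure (volume.restrict (Ioc (0 : ℝ) 1)) := ⟨by simp⟩
  rw [intervalIntegral.integral_of_le zero_le_one]
  refine hs.integral_mem hsc ?_ (hf.integrableOn_Icc.mono_set Ioc_subset_Icc_self)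
  exact (ae_restrict_mem measurableSet_Ioc).mono fun t ht => hfs t (Ioc_subset_Icc_self ht)

theorem ContDiff.sub_eq_integral_fderiv_segment {E G : Type*} [NormedAddCommGroup E]
    [NormedSpace ℂ E] [NormedAddCommGroup G] [NormedSpace ℂ G] [CompleteSpace G] {f : E → G}
    (hf : ContDiff ℂ 1 f) (a b : E) :
    f b - f a = ∫ t in (0 : ℝ)..1, fderiv ℂ f (a + t • (b - a)) (b - a) := by
  have hline : ∀ t : ℝ, HasDerivAt (fun s : ℝ => a + s • (b - a)) (b - a) t := fun t => by
    simpa using ((hasDerivAt_id t).smul_const (b - a)).const_add a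
  have hderiv : ∀ t : ℝ, HasDerivAt (fun s : ℝ => f (a + s • (b - a)))
      (fderiv ℂ f (a + t • (b - a)) (b - a)) t := fun t =>
    ((hf.differentiable one_ne_zero _).hasFDerivAt.restrictScalars ℝ).comp_hasDerivAt t (hline t)
  have hcont : Continuous fun t : ℝ => fderiv ℂ f (a + t • (b - a)) (b - a) :=
    ((hf.continuous_fderiv one_ne_zero).comp (by fun_prop)).clm_apply continuous_const
  rw [intervalIntegral.integral_eq_sub_of_hasDerivAt (fun t _ => hderiv t)
    (hcont.intervalIntegrable 0 1)]
  simp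

theorem fderiv_apply_eq_sum_jac (F : (Fin n → ℂ) → Fin n → ℂ) (z v : Fin n → ℂ)
    (i : Fin n) :
    fderiv ℂ (fun w => F w i) z v = ∑ j, jac F z i j * v j := by
  conv_lhs => rw [← Finset.univ_sum_single v]
  simp only [map_sum, jac]
  refine Finset.sum_congr rfl fun j _ => ?_
  rw [← mul_one (v j), ← smul_eq_mul, Pi.single_smul', map_smul, smul_eq_mul, mul_comm,
    smul_eq_mul, mul_one]

theorem IsPolyMap.contDiff {F : (Fin n → ℂ) → Fin n → ℂ} (hF : IsPolyMap F) (i : Fin n) :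
    ContDiff ℂ 1 fun w => F w i := by
  obtain ⟨p, hp⟩ := hF i
  rw [funext hp]
  exact (AnalyticOnNhd.eval_mvPolynomial p).contDiff

theorem IsPolyMap.continuous_jac {F : (Fin n → ℂ) → Fin n → ℂ} (hF : IsPolyMap F)
    (i j : Fin n) :
    Continuous fun z => jac F z i j :=
  ((hF.contDiff i).continuous_fderiv one_ne_zero).clm_apply continuous_const

theorem IsPolyMap.sub_eq_mulVec {F : (Fin n → ℂ) → Fin n → ℂ} (hF : IsPolyMap F)
    (a b : Fin n → ℂ) :
    F b - F a =
      of (fun i j => ∫ t in (0 : ℝ)..1, jac F (a + t • (b - a)) i j) *ᵥ (b - a) := by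
  ext i
  rw [Pi.sub_apply, (hF.contDiff i).sub_eq_integral_fderiv_segment a b]
  simp only [fderiv_apply_eq_sum_jac, mulVec, dotProduct, of_apply]
  have hcont : ∀ j, Continuous fun t : ℝ => jac F (a + t • (b - a)) i j := fun j =>
    (hF.continuous_jac i j).comp (by fun_prop)
  rw [intervalIntegral.integral_finsetSum
    (f := fun j t => jac F (a + t • (b - a)) i j * (b - a) j)
    fun j _ => ((hcont j).mul continuous_const).intervalIntegrable 0 1]
  exact Finset.sum_congr rfl fun j _ => intervalIntegral.integral_mul_const _ _

theorem convex_boxSet {IV : Fin n → Set ℂ} (h : ∀ j, Convex ℝ (IV j)) :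
    Convex ℝ (boxSet IV) :=
  fun _ hx _ hy _ _ ha hb hab j => h j (hx j) (hy j) ha hb hab

theorem IsPolyMap.exists_sub_eq_mulVec {F : (Fin n → ℂ) → Fin n → ℂ} (hF : IsPolyMap F)
    {IV : Fin n → Set ℂ} (hIV : ∀ j, IsRect (IV j))
    {MJ : Fin n → Fin n → Set ℂ} (hMJr : ∀ i j, IsRect (MJ i j))
    (hMJ : ∀ z ∈ boxSet IV, ∀ i j, jac F z i j ∈ MJ i j)
    {a b : Fin n → ℂ} (ha : a ∈ boxSet IV) (hb : b ∈ boxSet IV) :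
    ∃ M : Matrix (Fin n) (Fin n) ℂ,
      (∀ i j, M i j ∈ MJ i j) ∧ F b - F a = M *ᵥ (b - a) :=
  ⟨_, fun i j => (hMJr i j).convex.intervalIntegral_zero_one_mem (hMJr i j).isClosed
    ((hF.continuous_jac i j).comp (by fun_prop))
    fun _ ht => hMJ _ ((convex_boxSet fun j => (hIV j).convex).add_smul_sub_mem ha hb ht) i j,
    hF.sub_eq_mulVec a b⟩

theorem sub_mulVec_eq_add_mulVec_sub {ι R : Type*} [Fintype ι] [DecidableEq ι] [CommRing R]
    (Y M : Matrix ι ι R) {x z u v : ι → R} (h : v - u = M *ᵥ (z - x)) :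
    z - Y *ᵥ v = x - Y *ᵥ u + (1 - Y * M) *ᵥ (z - x) := by
  rw [sub_mulVec, one_mulVec, ← mulVec_mulVec, ← h, mulVec_sub]
  abel

theorem mem_Kset {x z u : Fin n → ℂ} {Y A : Matrix (Fin n) (Fin n) ℂ} {FX : Fin n → Set ℂ}
    {MJ : Fin n → Fin n → Set ℂ} {IV : Fin n → Set ℂ} (hu : ∀ j, u j ∈ FX j)
    (hz : z ∈ boxSet IV) (hA : ∀ i j, A i j ∈ Bmat Y MJ i j) (i : Fin n) :
    (x - Y *ᵥ u + A *ᵥ (z - x)) i ∈ Kset x Y FX MJ IV i := by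
  simp only [Pi.add_apply, Pi.sub_apply, mulVec, dotProduct]
  refine add_mem_add (sub_mem_sub rfl
    (Set.finsetSum_mem_finsetSum _ _ _ fun j _ => mul_mem_cmul rfl (hu j)))
    (Set.finsetSum_mem_finsetSum _ _ _ fun j _ => ?_)
  rw [mul_comm]
  exact mul_mem_cmul (sub_mem_sub (hz j) rfl) (hA i j)

theorem newton_step_mem_boxSet {F : (Fin n → ℂ) → Fin n → ℂ} (hF : IsPolyMap F)
    {IV : Fin n → Set ℂ} (hIV : ∀ j, IsRect (IV j)) {x : Fin n → ℂ} (hx : x ∈ boxSet IV)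
    {Y : Matrix (Fin n) (Fin n) ℂ} {FX : Fin n → Set ℂ} (hFX : ∀ j, F x j ∈ FX j)
    {MJ : Fin n → Fin n → Set ℂ} (hMJr : ∀ i j, IsRect (MJ i j))
    (hMJ : ∀ z ∈ boxSet IV, ∀ i j, jac F z i j ∈ MJ i j)
    (hK : ∀ i, Kset x Y FX MJ IV i ⊆ IV i) {z : Fin n → ℂ} (hz : z ∈ boxSet IV) :
    z - Y *ᵥ F z ∈ boxSet IV := by
  obtain ⟨M, hM, hFM⟩ := hF.exists_sub_eq_mulVec hIV hMJr hMJ hx hz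
  rw [sub_mulVec_eq_add_mulVec_sub Y M hFM]
  exact fun i => hK i (mem_Kset hFX hz (one_sub_mul_mem_Bmat Y hM) i)

theorem opNormInf_nonneg (M : Matrix (Fin n) (Fin n) ℂ) : 0 ≤ opNormInf M :=
  Real.sSup_nonneg <| by rintro _ ⟨v, -, rfl⟩; exact norm_nonneg _

theorem imatNorm_nonneg (B : Fin n → Fin n → Set ℂ) : 0 ≤ imatNorm B :=
  Real.sSup_nonneg <| by rintro _ ⟨M, -, rfl⟩; exact opNormInf_nonneg M

theorem norm_mulVec_le_of_norm_le {M : Matrix (Fin n) (Fin n) ℂ} {C : ℝ} (hC : 0 ≤ C)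
    (h : ∀ i j, ‖M i j‖ ≤ C) (v : Fin n → ℂ) : ‖M *ᵥ v‖ ≤ n * C * ‖v‖ := by
  refine (pi_norm_le_iff_of_nonneg (by positivity)).2 fun i => ?_
  calc ‖∑ j, M i j * v j‖ ≤ ∑ j, ‖M i j‖ * ‖v j‖ :=
        norm_sum_le_of_le _ fun j _ => norm_mul_le _ _
    _ ≤ ∑ _j : Fin n, C * ‖v‖ := by gcongr with j; exacts [h i j, norm_le_pi_norm v j]
    _ = n * C * ‖v‖ := by simp [mul_assoc]

theorem opNormInf_le_of_norm_le {M : Matrix (Fin n) (Fin n) ℂ} {C : ℝ} (hC : 0 ≤ C)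
    (h : ∀ i j, ‖M i j‖ ≤ C) : opNormInf M ≤ n * C :=
  Real.sSup_le (by rintro _ ⟨v, hv, rfl⟩; simpa [hv] using norm_mulVec_le_of_norm_le hC h v)
    (by positivity)

theorem norm_mulVec_le_opNormInf (M : Matrix (Fin n) (Fin n) ℂ) (v : Fin n → ℂ) :
    ‖M *ᵥ v‖ ≤ opNormInf M * ‖v‖ := by
  obtain rfl | hv := eq_or_ne v 0
  · simp
  have hv' : 0 < ‖v‖ := norm_pos_iff.2 hv
  have hbdd : BddAbove {r | ∃ v : Fin n → ℂ, ‖v‖ = 1 ∧ r = ‖M *ᵥ v‖} := by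
    obtain ⟨C, hC, hCM⟩ :=
      (finite_range fun p : Fin n × Fin n => M p.1 p.2).isBounded.exists_pos_norm_le
    exact ⟨n * C, by rintro _ ⟨w, hw, rfl⟩; simpa [hw] using
      norm_mulVec_le_of_norm_le hC.le (fun i j => hCM _ ⟨(i, j), rfl⟩) w⟩
  have hunit : ‖M *ᵥ (‖v‖⁻¹ • v)‖ ≤ opNormInf M :=
    le_csSup hbdd ⟨_, by rw [norm_smul, norm_inv, norm_norm, inv_mul_cancel₀ hv'.ne'], rfl⟩
  rw [mulVec_smul, norm_smul, norm_inv, norm_norm] at hunit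
  rwa [inv_mul_le_iff₀ hv', mul_comm] at hunit

theorem opNormInf_le_imatNorm {B : Fin n → Fin n → Set ℂ} (hB : ∀ i j, IsBounded (B i j))
    {M : Matrix (Fin n) (Fin n) ℂ} (hM : ∀ i j, M i j ∈ B i j) :
    opNormInf M ≤ imatNorm B := by
  obtain ⟨C, hC, hCB⟩ :=
    (isBounded_iUnion.2 fun i => isBounded_iUnion.2 fun j => hB i j).exists_pos_norm_le
  refine le_csSup ⟨n * C, ?_⟩ ⟨M, hM, rfl⟩
  rintro _ ⟨M', hM', rfl⟩
  exact opNormInf_le_of_norm_le hC.le fun i j => hCB _ (mem_iUnion₂.2 ⟨i, j, hM' i j⟩)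

theorem norm_sub_newton_step_le {F : (Fin n → ℂ) → Fin n → ℂ} (hF : IsPolyMap F)
    {IV : Fin n → Set ℂ} (hIV : ∀ j, IsRect (IV j)) (Y : Matrix (Fin n) (Fin n) ℂ)
    {MJ : Fin n → Fin n → Set ℂ} (hMJr : ∀ i j, IsRect (MJ i j))
    (hMJ : ∀ z ∈ boxSet IV, ∀ i j, jac F z i j ∈ MJ i j)
    {xstar z : Fin n → ℂ} (hstar : xstar ∈ boxSet IV) (hzero : F xstar = 0)
    (hz : z ∈ boxSet IV) :
    ‖xstar - (z - Y *ᵥ F z)‖ ≤ imatNorm (Bmat Y MJ) * ‖xstar - z‖ := by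
  obtain ⟨M, hM, hFM⟩ := hF.exists_sub_eq_mulVec hIV hMJr hMJ hstar hz
  have hstep : xstar - (z - Y *ᵥ F z) = (1 - Y * M) *ᵥ (xstar - z) := by
    rw [sub_mulVec_eq_add_mulVec_sub Y M hFM, hzero, mulVec_zero, sub_zero, ← neg_sub xstar z,
      mulVec_neg]
    abel
  rw [hstep]
  calc _ ≤ opNormInf (1 - Y * M) * ‖xstar - z‖ := norm_mulVec_le_opNormInf _ _
    _ ≤ _ := by
      gcongr
      exact opNormInf_le_imatNorm (isBounded_Bmat Y fun k j => (hMJr k j).isBounded)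
        (one_sub_mul_mem_Bmat Y hM)

theorem tendsto_of_dist_succ_le_mul {α : Type*} [PseudoMetricSpace α] {u : ℕ → α} {a : α}
    {c : ℝ} (hc0 : 0 ≤ c) (hc1 : c < 1) (h : ∀ i, dist a (u (i + 1)) ≤ c * dist a (u i)) :
    Tendsto u atTop (𝓝 a) := by
  have hgeom : ∀ i, dist a (u i) ≤ c ^ i * dist a (u 0) := by
    intro i
    induction i with
    | zero => simp
    | succ i ih => calc
        _ ≤ c * dist a (u i) := h i
        _ ≤ c * (c ^ i * dist a (u 0)) := by gcongr
        _ = _ := by ring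
  refine tendsto_iff_dist_tendsto_zero.2 (squeeze_zero (fun _ => dist_nonneg) (fun i => ?_)
    (by simpa using (tendsto_pow_atTop_nhds_zero_of_lt_one hc0 hc1).mul_const (dist a (u 0))))
  rw [dist_comm]
  exact hgeom i

theorem simplified_newton_linear_convergence_general
    (F : (Fin n → ℂ) → Fin n → ℂ) (hF : IsPolyMap F)
    (IV : Fin n → Set ℂ) (hIV : ∀ j, IsRect (IV j))
    (x : Fin n → ℂ) (hx : x ∈ boxSet IV)
    (Y : Matrix (Fin n) (Fin n) ℂ)
    (FX : Fin n → Set ℂ) (hFX : ∀ j, F x j ∈ FX j)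
    (MJ : Fin n → Fin n → Set ℂ) (hMJr : ∀ i j, IsRect (MJ i j))
    (hMJ : ∀ z ∈ boxSet IV, ∀ i j, jac F z i j ∈ MJ i j)
    (hK : ∀ i, Kset x Y FX MJ IV i ⊆ IV i)
    (hnorm : Real.sqrt 2 * imatNorm (Bmat Y MJ) < 1)
    (xstar : Fin n → ℂ) (hstar : xstar ∈ boxSet IV ∧ F xstar = 0)
    (x₀ : Fin n → ℂ) (hx₀ : x₀ ∈ boxSet IV)
    (xs : ℕ → Fin n → ℂ) (hxs0 : xs 0 = x₀)
    (hxs : ∀ i, xs (i + 1) = xs i - Y.mulVec (F (xs i))) :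
    (∀ i, xs i ∈ boxSet IV) ∧
    (∀ i, ‖xstar - xs (i + 1)‖ ≤
        (Real.sqrt 2 * imatNorm (Bmat Y MJ)) * ‖xstar - xs i‖) ∧
    Filter.Tendsto xs Filter.atTop (nhds xstar) := by
  have hmem : ∀ i, xs i ∈ boxSet IV := by
    intro i
    induction i with
    | zero => rwa [hxs0]
    | succ i ih => rw [hxs i]; exact newton_step_mem_boxSet hF hIV hx hFX hMJr hMJ hK ih
  have hcontr : ∀ i, ‖xstar - xs (i + 1)‖ ≤
      (Real.sqrt 2 * imatNorm (Bmat Y MJ)) * ‖xstar - xs i‖ := fun i => by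
    rw [hxs i]
    refine (norm_sub_newton_step_le hF hIV Y hMJr hMJ hstar.1 hstar.2 (hmem i)).trans ?_
    gcongr
    exact le_mul_of_one_le_left (imatNorm_nonneg _) Real.one_lt_sqrt_two.le
  exact ⟨hmem, hcontr, tendsto_of_dist_succ_le_mul
    (mul_nonneg (Real.sqrt_nonneg 2) (imatNorm_nonneg _)) hnorm
    (by simpa only [dist_eq_norm] using hcontr)⟩

theorem simplified_newton_linear_convergence
    (F : (Fin n → ℂ) → Fin n → ℂ) (hF : IsPolyMap F)
    (IV : Fin n → Set ℂ) (hIV : ∀ j, IsRect (IV j))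
    (x : Fin n → ℂ) (hx : x ∈ boxSet IV)
    (Y : Matrix (Fin n) (Fin n) ℂ) (hY : IsUnit Y)
    (FX : Fin n → Set ℂ) (hFXr : ∀ j, IsRect (FX j)) (hFX : ∀ j, F x j ∈ FX j)
    (MJ : Fin n → Fin n → Set ℂ) (hMJr : ∀ i j, IsRect (MJ i j))
    (hMJ : ∀ z ∈ boxSet IV, ∀ i j, jac F z i j ∈ MJ i j)
    (hK : ∀ i, Kset x Y FX MJ IV i ⊆ IV i)
    (hnorm : Real.sqrt 2 * imatNorm (Bmat Y MJ) < 1)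
    (xstar : Fin n → ℂ) (hstar : xstar ∈ boxSet IV ∧ F xstar = 0)
    (x₀ : Fin n → ℂ) (hx₀ : x₀ ∈ boxSet IV)
    (xs : ℕ → Fin n → ℂ) (hxs0 : xs 0 = x₀)
    (hxs : ∀ i, xs (i + 1) = xs i - Y.mulVec (F (xs i))) :
    (∀ i, xs i ∈ boxSet IV) ∧
    (∀ i, ‖xstar - xs (i + 1)‖ ≤
        (Real.sqrt 2 * imatNorm (Bmat Y MJ)) * ‖xstar - xs i‖) ∧
    Filter.Tendsto xs Filter.atTop (nhds xstar) :=
  simplified_newton_linear_convergence_general F hF IV hIV x hx Y FX hFX MJ hMJr hMJ hK hnorm xstar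
    hstar x₀ hx₀ xs hxs0 hxs
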